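/- Let 1 ≤ q⃗ = (q_1,…,q_n) < ∞ (componentwise) and let q⃗′ = (q_1′,…,q_n′) be the conjugate exponents, 1/q_j + 1/q_j′ = 1. There is a constant C > 0, depending only on n and q⃗, such that for every x_0 ∈ ℝ^n, every r > 0, and every measurable f on ℝ^n that lies locally in L^{q⃗}, ∫_{{y : |x_0−y| ≥ 2r}} |f(y)| · |x_0−y|^{−n} dy ≤ C ∫_{2r}^∞ t^{−1−Σ_{j=1}^n 1/q_j} ‖f‖_{L^{q⃗}(B(x_0,t))} dt. -/

import Mathlib

open MeasureTheory ENNReal Set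

noncomputable section

/-- Euclidean distance on `Fin n → ℝ`. -/
def eudist (n : ℕ) (x y : Fin n → ℝ) : ℝ :=
  Real.sqrt (∑ i, (x i - y i) ^ 2)

/-- Open Euclidean ball in `Fin n → ℝ`. -/
def eball (n : ℕ) (x : Fin n → ℝ) (r : ℝ) : Set (Fin n → ℝ) :=
  {y | eudist n x y < r}

/-- Iterated mixed Lebesgue "norm" of an `ℝ≥0∞`-valued function: the innermost
integration is in the first coordinate with exponent `q 0`, the outermost in the
last coordinate with exponent `q (n-1)`. -/
def mixedLnorm : (n : ℕ) → (Fin n → ℝ) → ((Fin n → ℝ) → ℝ≥0∞) → ℝ≥0∞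
  | 0, _, g => g (fun i => i.elim0)
  | (n + 1), q, g =>
      (∫⁻ t : ℝ, (mixedLnorm n (fun i => q i.castSucc)
          (fun y => g (Fin.snoc y t))) ^ q (Fin.last n)) ^ (1 / q (Fin.last n))

/-- Mixed Lebesgue norm `‖f‖_{L^{q⃗}}` of a real-valued function on `ℝ^n`. -/
def mixedNorm (n : ℕ) (q : Fin n → ℝ) (f : (Fin n → ℝ) → ℝ) : ℝ≥0∞ :=
  mixedLnorm n q (fun x => ENNReal.ofReal |f x|)

/-- Generalized mixed Morrey norm of an `ℝ≥0∞`-valued function. -/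
def morreyLnorm (n : ℕ) (q : Fin n → ℝ) (φ : (Fin n → ℝ) → ℝ → ℝ)
    (g : (Fin n → ℝ) → ℝ≥0∞) : ℝ≥0∞ :=
  ⨆ (x : Fin n → ℝ) (r : ℝ) (_ : 0 < r),
    (ENNReal.ofReal (φ x r))⁻¹
      * (mixedNorm n q ((eball n x r).indicator fun _ => (1 : ℝ)))⁻¹
      * mixedLnorm n q ((eball n x r).indicator g)

/-- Generalized mixed Morrey norm `‖f‖_{M^φ_{q⃗}}` of a real-valued function. -/
def morreyNorm (n : ℕ) (q : Fin n → ℝ) (φ : (Fin n → ℝ) → ℝ → ℝ)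
    (f : (Fin n → ℝ) → ℝ) : ℝ≥0∞ :=
  morreyLnorm n q φ (fun x => ENNReal.ofReal |f x|)

/-- The BMO norm (as an extended real number). -/
def bmoNorm (n : ℕ) (b : (Fin n → ℝ) → ℝ) : ℝ≥0∞ :=
  ⨆ (x : Fin n → ℝ) (r : ℝ) (_ : 0 < r),
    ENNReal.ofReal ((volume (eball n x r)).toReal⁻¹
      * ∫ y in eball n x r, |b y - ⨍ z in eball n x r, b z|)

/-- Sublinearity in each entry of a multi-(sub)linear operator. -/
def EntrywiseSublinear (n m : ℕ)
    (T : (Fin m → ((Fin n → ℝ) → ℝ)) → ((Fin n → ℝ) → ℝ)) : Prop :=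
  (∀ (f : Fin m → ((Fin n → ℝ) → ℝ)) (i : Fin m) (g h : (Fin n → ℝ) → ℝ)
      (x : Fin n → ℝ),
      |T (Function.update f i (g + h)) x|
        ≤ |T (Function.update f i g) x| + |T (Function.update f i h) x|) ∧
  (∀ (f : Fin m → ((Fin n → ℝ) → ℝ)) (i : Fin m) (c : ℝ) (g : (Fin n → ℝ) → ℝ)
      (x : Fin n → ℝ),
      |T (Function.update f i (c • g)) x| = |c| * |T (Function.update f i g) x|)

/-- The multi-sublinear size condition (1.1) with constant `C`. -/
def SizeCond (n m : ℕ)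
    (T : (Fin m → ((Fin n → ℝ) → ℝ)) → ((Fin n → ℝ) → ℝ)) (C : ℝ) : Prop :=
  ∀ f : Fin m → ((Fin n → ℝ) → ℝ),
    (∀ i, Integrable (f i)) → (∀ i, HasCompactSupport (f i)) →
    ∀ x, x ∉ ⋂ j, Function.support (f j) →
      |T f x| ≤ C * ∫ y : Fin m → (Fin n → ℝ),
        (∏ i, |f i (y i)|) / Real.sqrt (∑ i, eudist n x (y i) ^ 2) ^ (m * n)

/-- The multi-sublinear commutator size condition (1.2), with symbol `b` and
distinguished index `i`, with constant `C`. -/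
def CommSizeCond (n m : ℕ) (b : (Fin n → ℝ) → ℝ) (i : Fin m)
    (T : (Fin m → ((Fin n → ℝ) → ℝ)) → ((Fin n → ℝ) → ℝ)) (C : ℝ) : Prop :=
  ∀ f : Fin m → ((Fin n → ℝ) → ℝ),
    (∀ k, Integrable (f k)) → (∀ k, HasCompactSupport (f k)) →
    ∀ x, x ∉ ⋂ j, Function.support (f j) →
      |T f x| ≤ C * ∫ y : Fin m → (Fin n → ℝ),
        |b x - b (y i)| * (∏ k, |f k (y k)|)
          / Real.sqrt (∑ k, eudist n x (y k) ^ 2) ^ (m * n)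

/-- The Hardy–Littlewood maximal operator. -/
def hlMax (n : ℕ) (f : (Fin n → ℝ) → ℝ) (x : Fin n → ℝ) : ℝ≥0∞ :=
  ⨆ (r : ℝ) (_ : 0 < r),
    (volume (eball n x r))⁻¹ * ∫⁻ y in eball n x r, ENNReal.ofReal |f y|

/-- The maximal commutator of the Hardy–Littlewood maximal operator. -/
def maxComm (n : ℕ) (b f : (Fin n → ℝ) → ℝ) (x : Fin n → ℝ) : ℝ≥0∞ :=
  ⨆ (r : ℝ) (_ : 0 < r),
    (volume (eball n x r))⁻¹
      * ∫⁻ y in eball n x r, ENNReal.ofReal (|b x - b y| * |f y|)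

/-- The multi-sublinear maximal operator `M_m`. -/
def multiMax (n m : ℕ) (f : Fin m → ((Fin n → ℝ) → ℝ)) (x : Fin n → ℝ) : ℝ≥0∞ :=
  ⨆ (r : ℝ) (_ : 0 < r),
    ∏ i, (volume (eball n x r))⁻¹ * ∫⁻ y in eball n x r, ENNReal.ofReal |f i y|

/-- The multi-sublinear maximal commutator `M^{b⃗}_{m,i}`. -/
def multiMaxComm (n m : ℕ) (b : Fin m → ((Fin n → ℝ) → ℝ)) (i : Fin m)
    (f : Fin m → ((Fin n → ℝ) → ℝ)) (x : Fin n → ℝ) : ℝ≥0∞ :=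
  (⨆ (r : ℝ) (_ : 0 < r),
      (volume (eball n x r))⁻¹
        * ∫⁻ y in eball n x r, ENNReal.ofReal (|b i x - b i y| * |f i y|)) *
  (⨆ (r : ℝ) (_ : 0 < r),
      ∏ k ∈ Finset.univ.erase i,
        (volume (eball n x r))⁻¹ * ∫⁻ y in eball n x r, ENNReal.ofReal |f k y|)

/-- `w` is an `A₁` weight with constant `c`. -/
def IsA1Weight (n : ℕ) (w : (Fin n → ℝ) → ℝ) (c : ℝ) : Prop :=
  (∀ x, 0 < w x) ∧ LocallyIntegrable w ∧
    ∀ (x : Fin n → ℝ) (r : ℝ), 0 < r →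
      ∀ᵐ y ∂(volume.restrict (eball n x r)),
        (volume (eball n x r)).toReal⁻¹ * ∫ z in eball n x r, w z ≤ c * w y

/-- `T` is an `m`-linear Calderón–Zygmund operator. -/
def IsCZOperator (n m : ℕ)
    (T : (Fin m → ((Fin n → ℝ) → ℝ)) → ((Fin n → ℝ) → ℝ)) : Prop :=
  -- additivity in each entry
  (∀ (f : Fin m → ((Fin n → ℝ) → ℝ)) (i : Fin m) (g h : (Fin n → ℝ) → ℝ),
      T (Function.update f i (g + h))
        = T (Function.update f i g) + T (Function.update f i h)) ∧
  -- homogeneity in each entry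
  (∀ (f : Fin m → ((Fin n → ℝ) → ℝ)) (i : Fin m) (c : ℝ) (g : (Fin n → ℝ) → ℝ),
      T (Function.update f i (c • g)) = c • T (Function.update f i g)) ∧
  -- boundedness from a product of Lebesgue spaces
  (∃ (s : Fin m → ℝ) (s₀ A : ℝ), (∀ i, 1 ≤ s i) ∧ 0 < s₀ ∧
      (1 / s₀ = ∑ i, 1 / s i) ∧ 0 < A ∧
      ∀ f : Fin m → ((Fin n → ℝ) → ℝ), (∀ i, Measurable (f i)) →
        (∀ i, mixedNorm n (fun _ => s i) (f i) ≠ ⊤) →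
        mixedNorm n (fun _ => s₀) (T f)
          ≤ ENNReal.ofReal A * ∏ i, mixedNorm n (fun _ => s i) (f i)) ∧
  -- Calderón–Zygmund kernel and representation
  (∃ (K : (Fin n → ℝ) → (Fin m → (Fin n → ℝ)) → ℝ) (ε C : ℝ), 0 < ε ∧ 0 < C ∧
      -- size estimate
      (∀ x y, ¬(∀ k, y k = x) →
        |K x y| ≤ C / (∑ k, eudist n x (y k)) ^ (m * n)) ∧
      -- regularity in the first variable
      (∀ x x' y, ¬(∀ k, y k = x) →
        2 * eudist n x x' ≤ (⨆ k, eudist n x (y k)) →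
        |K x y - K x' y|
          ≤ C * eudist n x x' ^ ε / (∑ k, eudist n x (y k)) ^ ((m * n : ℝ) + ε)) ∧
      -- regularity in each of the remaining variables
      (∀ x y (k : Fin m) (y' : Fin n → ℝ), ¬(∀ j, y j = x) →
        2 * eudist n (y k) y' ≤ (⨆ j, eudist n x (y j)) →
        |K x y - K x (Function.update y k y')|
          ≤ C * eudist n (y k) y' ^ ε / (∑ j, eudist n x (y j)) ^ ((m * n : ℝ) + ε)) ∧
      -- integral representation off the supports
      (∀ f : Fin m → ((Fin n → ℝ) → ℝ),
        (∀ j, Measurable (f j)) → (∀ j, ∃ M : ℝ, ∀ x, |f j x| ≤ M) →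
        (∀ j, HasCompactSupport (f j)) →
        ∀ x, x ∉ ⋂ j, Function.support (f j) →
          T f x = ∫ y : Fin m → (Fin n → ℝ), K x y * ∏ j, f j (y j)))

/-- The commutator `K^{b⃗}_{m,i}` of an `m`-linear operator. -/
def czComm (n m : ℕ) (T : (Fin m → ((Fin n → ℝ) → ℝ)) → ((Fin n → ℝ) → ℝ))
    (b : Fin m → ((Fin n → ℝ) → ℝ)) (i : Fin m)
    (f : Fin m → ((Fin n → ℝ) → ℝ)) : (Fin n → ℝ) → ℝ :=
  fun x => b i x * T f x - T (Function.update f i fun y => b i y * f i y) x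

/-!
Since `|x₀ - y|^{-n} = n ∫_{|x₀ - y|}^∞ t^{-n-1} dt`, Tonelli's theorem bounds the left-hand side
by `n ∫_{2r}^∞ t^{-n-1} ∫_{B(x₀,t)} |f| dt`. The ball `B(x₀,t)` lies in the cube
`∏ᵢ (x₀ᵢ - t, x₀ᵢ + t)`, and Hölder's inequality in one coordinate at a time gives
`∫_{B(x₀,t)} |f| ≤ (2t)^{n - Σ 1/qⱼ} ‖f‖_{L^{q⃗}(B(x₀,t))}`. Hence `C = n 2^{n - Σ 1/qⱼ}` works.
-/

theorem setLIntegral_le_lintegral_rpow_mul_measure_rpow {α : Type*} [MeasurableSpace α]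
    {μ : Measure α} {p : ℝ} (hp : 1 ≤ p) {F : α → ℝ≥0∞} (hF : AEMeasurable F μ) (s : Set α) :
    ∫⁻ x in s, F x ∂μ ≤ (∫⁻ x, F x ^ p ∂μ) ^ (1 / p) * μ s ^ (1 - 1 / p) := by
  have h := eLpNorm'_le_eLpNorm'_mul_rpow_measure_univ one_pos hp
    (hF.restrict (s := s)).aestronglyMeasurable
  simp only [eLpNorm'_eq_lintegral_enorm, enorm_eq_self, ENNReal.rpow_one, div_one,
    Measure.restrict_apply_univ] at h
  refine h.trans (mul_le_mul_left (ENNReal.rpow_le_rpow (setLIntegral_le_lintegral _ _) ?_) _)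
  exact one_div_nonneg.mpr (zero_le_one.trans hp)

theorem setLIntegral_Ioi_ofReal_rpow_neg_sub_one {s c : ℝ} (hs : 0 < s) (hc : 0 < c) :
    ∫⁻ t in Ioi c, ENNReal.ofReal (t ^ (-s - 1)) = ENNReal.ofReal (c ^ (-s) / s) := by
  have ha : -s - 1 < -1 := by linarith
  rw [← ofReal_integral_eq_lintegral_ofReal (integrableOn_Ioi_rpow_of_lt ha hc)]
  · rw [integral_Ioi_rpow_of_lt ha hc, show -s - 1 + 1 = -s by ring, neg_div_neg_eq]
  · filter_upwards [ae_restrict_mem measurableSet_Ioi] with t ht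
    exact Real.rpow_nonneg (hc.trans ht).le _

theorem setLIntegral_mul_rpow_neg_le {α : Type*} [MeasurableSpace α] {μ : Measure α} [SFinite μ]
    {d : α → ℝ} (hd : Measurable d) {g : α → ℝ≥0∞} (hg : Measurable g) {s ρ : ℝ} (hs : 0 < s)
    (hρ : 0 < ρ) :
    ∫⁻ y in {y | ρ ≤ d y}, g y * ENNReal.ofReal (d y ^ (-s)) ∂μ
      ≤ ENNReal.ofReal s
        * ∫⁻ t in Ioi ρ, ENNReal.ofReal (t ^ (-s - 1)) * ∫⁻ y in {y | d y < t}, g y ∂μ := by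
  set w : ℝ → ℝ≥0∞ := fun t => ENNReal.ofReal (t ^ (-s - 1))
  set E : Set (α × ℝ) := {p | d p.1 < p.2}
  have hE : MeasurableSet E := measurableSet_lt (hd.comp measurable_fst) measurable_snd
  have hw : Measurable w := by fun_prop
  -- `E.indicator _ (y, t)` is definitionally an indicator in `t` (of `Ioi (d y)`) and in `y`
  -- (of `{y | d y < t}`).
  have hlayer : ∀ y ∈ {y | ρ ≤ d y}, g y * ENNReal.ofReal (d y ^ (-s))
      = ENNReal.ofReal s * ∫⁻ t in Ioi ρ, E.indicator (fun p => g p.1 * w p.2) (y, t) := by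
    intro y hy
    change _ = _ * ∫⁻ t in Ioi ρ, (Ioi (d y)).indicator (fun t => g y * w t) t
    rw [lintegral_indicator measurableSet_Ioi, Measure.restrict_restrict measurableSet_Ioi,
      Ioi_inter_Ioi, sup_eq_left.mpr (show ρ ≤ d y from hy), lintegral_const_mul _ hw,
      setLIntegral_Ioi_ofReal_rpow_neg_sub_one hs (hρ.trans_le hy), ← mul_assoc,
      mul_comm (ENNReal.ofReal s), mul_assoc, ← ENNReal.ofReal_mul hs.le, mul_div_cancel₀ _ hs.ne']
  have hslice : ∀ t, ∫⁻ y in {y | ρ ≤ d y}, E.indicator (fun p => g p.1 * w p.2) (y, t) ∂μ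
      ≤ w t * ∫⁻ y in {y | d y < t}, g y ∂μ := by
    intro t
    change ∫⁻ y in _, {y | d y < t}.indicator (fun y => g y * w t) y ∂μ ≤ _
    rw [mul_comm, ← lintegral_mul_const _ hg,
      ← lintegral_indicator (measurableSet_lt hd measurable_const)]
    exact setLIntegral_le_lintegral _ _
  calc ∫⁻ y in {y | ρ ≤ d y}, g y * ENNReal.ofReal (d y ^ (-s)) ∂μ
      = ∫⁻ y in {y | ρ ≤ d y}, (ENNReal.ofReal s
          * ∫⁻ t in Ioi ρ, E.indicator (fun p => g p.1 * w p.2) (y, t)) ∂μ :=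
        setLIntegral_congr_fun (hd measurableSet_Ici) hlayer
    _ = ENNReal.ofReal s * ∫⁻ t in Ioi ρ, ∫⁻ y in {y | ρ ≤ d y},
          E.indicator (fun p => g p.1 * w p.2) (y, t) ∂μ := by
        rw [lintegral_const_mul' _ _ ENNReal.ofReal_ne_top, lintegral_lintegral_swap]
        exact ((hg.comp measurable_fst).mul (hw.comp measurable_snd)).indicator hE |>.aemeasurable
    _ ≤ ENNReal.ofReal s * ∫⁻ t in Ioi ρ, w t * ∫⁻ y in {y | d y < t}, g y ∂μ :=
        mul_le_mul_right (lintegral_mono hslice) _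

theorem measurable_fin_snoc {α : Type*} [MeasurableSpace α] {n : ℕ} :
    Measurable fun p : (Fin n → α) × α => (Fin.snoc p.1 p.2 : Fin (n + 1) → α) := by
  convert (MeasurableEquiv.piFinSuccAbove (fun _ => α) (Fin.last n)).symm.measurable.comp
    measurable_swap using 1
  ext p : 1
  simp only [Function.comp_apply, MeasurableEquiv.piFinSuccAbove_symm_apply, Fin.insertNthEquiv,
    Equiv.coe_fn_mk, Prod.fst_swap, Prod.snd_swap, Fin.insertNth_last']

theorem setLIntegral_univ_pi_fin_snoc {α : Type*} [MeasureSpace α]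
    [SigmaFinite (volume : Measure α)] {n : ℕ} (s : Fin (n + 1) → Set α)
    {g : (Fin (n + 1) → α) → ℝ≥0∞} (hg : Measurable g) :
    ∫⁻ y in univ.pi s, g y
      = ∫⁻ t in s (Fin.last n), ∫⁻ y in univ.pi (fun i => s i.castSucc), g (Fin.snoc y t) := by
  simp only [volume_pi, Measure.restrict_pi_pi]
  rw [← ((measurePreserving_piFinSuccAbove (fun i => volume.restrict (s i)) (Fin.last n)).symm
    ).lintegral_comp_emb (MeasurableEquiv.measurableEmbedding _), lintegral_prod]
  · simp only [Fin.succAbove_last, MeasurableEquiv.piFinSuccAbove_symm_apply, Fin.insertNthEquiv,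
      Equiv.coe_fn_mk, Fin.insertNth_last']
  · exact (hg.comp (MeasurableEquiv.measurable _)).aemeasurable

theorem Measurable.mixedLnorm_prod_right {α : Type*} [MeasurableSpace α] {n : ℕ}
    {q : Fin n → ℝ} {g : α × (Fin n → ℝ) → ℝ≥0∞} (hg : Measurable g) :
    Measurable fun a => mixedLnorm n q fun y => g (a, y) := by
  induction n generalizing α with
  | zero => exact hg.comp (measurable_id.prodMk measurable_const)
  | succ n ih =>
    have h : Measurable fun p : α × ℝ =>
        mixedLnorm n (fun i => q i.castSucc) fun y => g (p.1, Fin.snoc y p.2) :=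
      ih (hg.comp (measurable_fst.fst.prodMk
        (measurable_fin_snoc.comp (measurable_snd.prodMk measurable_fst.snd))))
    exact ((h.pow_const _).lintegral_prod_right').pow_const _

theorem setLIntegral_univ_pi_le_mixedLnorm_mul {n : ℕ} {q : Fin n → ℝ} (hq : ∀ j, 1 ≤ q j)
    {g : (Fin n → ℝ) → ℝ≥0∞} (hg : Measurable g) (s : Fin n → Set ℝ) :
    ∫⁻ y in univ.pi s, g y ≤ mixedLnorm n q g * ∏ i, volume (s i) ^ (1 - 1 / q i) := by
  induction n with
  | zero =>
    calc ∫⁻ y in univ.pi s, g y ≤ ∫⁻ y, g y := setLIntegral_le_lintegral _ _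
      _ = mixedLnorm 0 q g * ∏ i, volume (s i) ^ (1 - 1 / q i) := by
        rw [lintegral_unique, volume_pi, Measure.pi_univ]
        simpa [mixedLnorm] using congrArg g (Subsingleton.elim _ _)
  | succ n ih =>
    set F : ℝ → ℝ≥0∞ := fun t => mixedLnorm n (fun i => q i.castSucc) fun y => g (Fin.snoc y t)
    set P := ∏ i : Fin n, volume (s i.castSucc) ^ (1 - 1 / q i.castSucc)
    have hF : Measurable F :=
      (hg.comp (measurable_fin_snoc.comp measurable_swap)).mixedLnorm_prod_right
    calc ∫⁻ y in univ.pi s, g y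
        = ∫⁻ t in s (Fin.last n), ∫⁻ y in univ.pi (fun i => s i.castSucc), g (Fin.snoc y t) :=
          setLIntegral_univ_pi_fin_snoc s hg
      _ ≤ ∫⁻ t in s (Fin.last n), F t * P :=
          lintegral_mono fun t => ih (fun j => hq _)
            (hg.comp (measurable_fin_snoc.comp (measurable_id.prodMk measurable_const))) _
      _ = (∫⁻ t in s (Fin.last n), F t) * P := lintegral_mul_const _ hF
      _ ≤ ((∫⁻ t, F t ^ q (Fin.last n)) ^ (1 / q (Fin.last n))
            * volume (s (Fin.last n)) ^ (1 - 1 / q (Fin.last n))) * P :=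
          mul_le_mul_left
            (setLIntegral_le_lintegral_rpow_mul_measure_rpow (hq _) hF.aemeasurable _) _
      _ = mixedLnorm (n + 1) q g * ∏ i, volume (s i) ^ (1 - 1 / q i) := by
          rw [Fin.prod_univ_castSucc, mixedLnorm]
          ring

theorem eudist_nonneg {n : ℕ} (x y : Fin n → ℝ) : 0 ≤ eudist n x y :=
  Real.sqrt_nonneg _

theorem abs_sub_le_eudist {n : ℕ} (x y : Fin n → ℝ) (i : Fin n) : |x i - y i| ≤ eudist n x y := by
  rw [eudist, ← Real.sqrt_sq_eq_abs]
  exact Real.sqrt_le_sqrt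
    (Finset.single_le_sum (f := fun j => (x j - y j) ^ 2) (fun j _ => sq_nonneg _)
      (Finset.mem_univ i))

theorem continuous_eudist {n : ℕ} (x : Fin n → ℝ) : Continuous (eudist n x) := by
  unfold eudist
  fun_prop

theorem measurableSet_eball_eudist (n : ℕ) (x : Fin n → ℝ) (t : ℝ) :
    MeasurableSet (eball n x t) :=
  measurableSet_lt (continuous_eudist x).measurable measurable_const

theorem eball_subset_univ_pi_Ioo (n : ℕ) (x : Fin n → ℝ) (t : ℝ) :
    eball n x t ⊆ univ.pi fun i => Ioo (x i - t) (x i + t) := by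
  intro y hy i _
  have h := abs_lt.mp ((abs_sub_le_eudist x y i).trans_lt hy)
  constructor <;> linarith [h.1, h.2]

theorem setLIntegral_eball_le_mixedNorm {n : ℕ} {q : Fin n → ℝ} (hq : ∀ j, 1 ≤ q j)
    {f : (Fin n → ℝ) → ℝ} (hf : Measurable f) (x : Fin n → ℝ) {t : ℝ} (ht : 0 < t) :
    ∫⁻ y in eball n x t, ENNReal.ofReal |f y|
      ≤ ENNReal.ofReal ((2 * t) ^ ((n : ℝ) - ∑ j, 1 / q j))
        * mixedNorm n q ((eball n x t).indicator f) := by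
  set g := (eball n x t).indicator fun y => ENNReal.ofReal |f y|
  have hg : Measurable g :=
    (ENNReal.measurable_ofReal.comp hf.abs).indicator (measurableSet_eball_eudist n x t)
  have hnorm : mixedNorm n q ((eball n x t).indicator f) = mixedLnorm n q g := by
    rw [mixedNorm]
    congr 1
    exact (indicator_comp_of_zero (g := fun a => ENNReal.ofReal |a|) (by simp)).symm
  have hcube : ∏ i, volume (Ioo (x i - t) (x i + t)) ^ (1 - 1 / q i)
      = ENNReal.ofReal ((2 * t) ^ ((n : ℝ) - ∑ j, 1 / q j)) := by
    have h2t : 0 < 2 * t := by linarith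
    simp only [Real.volume_Ioo, show ∀ i, x i + t - (x i - t) = 2 * t from fun i => by ring,
      ENNReal.ofReal_rpow_of_pos h2t]
    rw [← ENNReal.ofReal_prod_of_nonneg fun i _ => (Real.rpow_pos_of_pos h2t _).le,
      ← Real.rpow_sum_of_pos h2t, Finset.sum_sub_distrib]
    simp
  calc ∫⁻ y in eball n x t, ENNReal.ofReal |f y|
      = ∫⁻ y in eball n x t, g y :=
        setLIntegral_congr_fun (measurableSet_eball_eudist n x t) fun y hy =>
          (indicator_of_mem hy fun y => ENNReal.ofReal |f y|).symm
    _ ≤ ∫⁻ y in univ.pi fun i => Ioo (x i - t) (x i + t), g y :=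
        lintegral_mono_set (eball_subset_univ_pi_Ioo n x t)
    _ ≤ mixedLnorm n q g * ∏ i, volume (Ioo (x i - t) (x i + t)) ^ (1 - 1 / q i) :=
        setLIntegral_univ_pi_le_mixedLnorm_mul hq hg _
    _ = _ := by rw [hcube, hnorm, mul_comm]

theorem stmt2 (n : ℕ) (hn : 0 < n) (q : Fin n → ℝ) (hq : ∀ j, 1 ≤ q j) :
    ∃ C : ℝ, 0 < C ∧ ∀ (x₀ : Fin n → ℝ) (r : ℝ), 0 < r →
      ∀ f : (Fin n → ℝ) → ℝ, Measurable f →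
      (∀ (x : Fin n → ℝ) (t : ℝ), mixedNorm n q ((eball n x t).indicator f) ≠ ⊤) →
      (∫⁻ y in {y | 2 * r ≤ eudist n x₀ y},
          ENNReal.ofReal (|f y| / eudist n x₀ y ^ n))
        ≤ ENNReal.ofReal C
            * ∫⁻ t in Set.Ioi (2 * r),
                ENNReal.ofReal (t ^ (-1 - ∑ j, 1 / q j))
                  * mixedNorm n q ((eball n x₀ t).indicator f) := by
  set σ := ∑ j, 1 / q j
  refine ⟨n * 2 ^ ((n : ℝ) - σ), by positivity, fun x₀ r hr f hf _ => ?_⟩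
  have hn' : (0 : ℝ) < n := Nat.cast_pos.mpr hn
  have h2r : 0 < 2 * r := by linarith
  have hweight : ∀ t : ℝ, 0 < t →
      t ^ (-(n : ℝ) - 1) * (2 * t) ^ ((n : ℝ) - σ) = 2 ^ ((n : ℝ) - σ) * t ^ (-1 - σ) := by
    intro t ht
    rw [Real.mul_rpow zero_le_two ht.le, mul_left_comm, ← Real.rpow_add ht]
    ring_nf
  calc ∫⁻ y in {y | 2 * r ≤ eudist n x₀ y}, ENNReal.ofReal (|f y| / eudist n x₀ y ^ n)
      = ∫⁻ y in {y | 2 * r ≤ eudist n x₀ y},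
          ENNReal.ofReal |f y| * ENNReal.ofReal (eudist n x₀ y ^ (-(n : ℝ))) := by
        refine lintegral_congr fun y => ?_
        rw [← ENNReal.ofReal_mul (abs_nonneg _), Real.rpow_neg (eudist_nonneg x₀ y),
          Real.rpow_natCast, div_eq_mul_inv]
    _ ≤ ENNReal.ofReal n * ∫⁻ t in Ioi (2 * r),
          ENNReal.ofReal (t ^ (-(n : ℝ) - 1)) * ∫⁻ y in eball n x₀ t, ENNReal.ofReal |f y| :=
        setLIntegral_mul_rpow_neg_le (continuous_eudist x₀).measurable
          (ENNReal.measurable_ofReal.comp hf.abs) hn' h2r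
    _ ≤ ENNReal.ofReal n * ∫⁻ t in Ioi (2 * r), ENNReal.ofReal (t ^ (-(n : ℝ) - 1))
          * (ENNReal.ofReal ((2 * t) ^ ((n : ℝ) - σ))
            * mixedNorm n q ((eball n x₀ t).indicator f)) := by
        refine mul_le_mul_right (setLIntegral_mono' measurableSet_Ioi fun t ht => ?_) _
        exact mul_le_mul_right
          (setLIntegral_eball_le_mixedNorm hq hf x₀ (h2r.trans ht)) _
    _ = ENNReal.ofReal (n * 2 ^ ((n : ℝ) - σ)) * ∫⁻ t in Ioi (2 * r),
          ENNReal.ofReal (t ^ (-1 - σ)) * mixedNorm n q ((eball n x₀ t).indicator f) := by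
        simp only [← lintegral_const_mul' _ _ ENNReal.ofReal_ne_top]
        refine setLIntegral_congr_fun measurableSet_Ioi fun t ht => ?_
        have ht : 0 < t := h2r.trans ht
        rw [← mul_assoc (ENNReal.ofReal (t ^ _)), ← ENNReal.ofReal_mul (Real.rpow_nonneg ht.le _),
          hweight t ht, ENNReal.ofReal_mul hn'.le, ENNReal.ofReal_mul (by positivity)]
        ring
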